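/- Let H be a finite-dimensional complex inner product space, let Π and Δ be orthogonal projections on H, and let U = (2Π − I)(2Δ − I). Let ψ ∈ ker Π and set w = (Π − ΠΔΠ)⁺ Δ ψ. Then w ∈ im Π, and U(ψ + w) = (2P_{ker Π ∩ ker Δ} − I)ψ + w, where P_{ker Π ∩ ker Δ} is the orthogonal projection onto ker Π ∩ ker Δ. (In other words, U transduces ψ into (2P_{ker Π ∩ ker Δ} − I)ψ with catalyst w.) -/

import Mathlib

open LinearMap

/-- The orthogonal projection onto a submodule, as an endomorphism of the ambient space. -/
noncomputable def projL {H : Type*} [NormedAddCommGroup H] [InnerProductSpace ℂ H]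
    (K : Submodule ℂ H) [K.HasOrthogonalProjection] : H →ₗ[ℂ] H :=
  K.subtype ∘ₗ K.orthogonalProjectionOnto.toLinearMap

/-- The four Moore–Penrose equations: `B` is the Moore–Penrose pseudoinverse of `A`. -/
def IsMPInv {H : Type*} [NormedAddCommGroup H] [InnerProductSpace ℂ H]
    [FiniteDimensional ℂ H] (A B : H →ₗ[ℂ] H) : Prop :=
  A ∘ₗ B ∘ₗ A = A ∧ B ∘ₗ A ∘ₗ B = B ∧
    adjoint (A ∘ₗ B) = A ∘ₗ B ∧ adjoint (B ∘ₗ A) = B ∘ₗ A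

/-!
Write `A = Π - ΠΔΠ`. With `C = Π - ΔΠ` one has `A = C* C`, so `range A = range C*`, and this
range contains `ΠΔψ = -C* ψ`. Since `A A⁺` is self-adjoint and `A Π = A`, we get `A A⁺ Π = A A⁺`,
hence `A w = A A⁺ ΠΔψ = ΠΔψ`; moreover `w ∈ range A⁺ ⊆ range A ⊆ range Π`. Together these say
`ΠΔ(ψ + w) = w`. Then `(I - Δ)(ψ + w)` lies in `ker Π ∩ ker Δ` and differs from `ψ` by
`Δ(ψ + w) - w ∈ range Δ + range Π ⊆ (ker Π ∩ ker Δ)ᗮ`, so it is `P_{ker Π ∩ ker Δ} ψ`; expanding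
`U(ψ + w)` finishes the proof.
-/

namespace LinearMap

variable {𝕜 E : Type*} [RCLike 𝕜] [NormedAddCommGroup E] [InnerProductSpace 𝕜 E]
  {p q : E →ₗ[𝕜] E}

lemma IsSymmetricProjection.apply_apply (hp : p.IsSymmetricProjection) (x : E) :
    p (p x) = p x :=
  congr($(hp.isIdempotentElem.eq) x)

lemma IsSymmetricProjection.sup_range_le_orthogonal_ker_inf_ker
    (hp : p.IsSymmetricProjection) (hq : q.IsSymmetricProjection) :
    range p ⊔ range q ≤ (ker p ⊓ ker q)ᗮ := by
  rw [← hp.isSymmetric.orthogonal_range, ← hq.isSymmetric.orthogonal_range,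
    Submodule.inf_orthogonal]
  exact Submodule.le_orthogonal_orthogonal _

lemma IsSymmetricProjection.starProjection_ker_inf_ker_eq (hp : p.IsSymmetricProjection)
    (hq : q.IsSymmetricProjection) [(ker p ⊓ ker q).HasOrthogonalProjection] {u v : E}
    (hv : v ∈ ker p ⊓ ker q) (huv : u - v ∈ range p ⊔ range q) :
    (ker p ⊓ ker q).starProjection u = v :=
  Submodule.eq_starProjection_of_mem_orthogonal hv (hp.sup_range_le_orthogonal_ker_inf_ker hq huv)

lemma IsSymmetricProjection.reflection_comp_reflection_apply_add (hp : p.IsSymmetricProjection)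
    (hq : q.IsSymmetricProjection) [(ker p ⊓ ker q).HasOrthogonalProjection] {ψ w : E}
    (hψ : ψ ∈ ker p) (hw : w ∈ range p) (hpq : p (q (ψ + w)) = w) :
    (((2 : 𝕜) • p - id) ∘ₗ ((2 : 𝕜) • q - id)) (ψ + w) =
      (2 : 𝕜) • (ker p ⊓ ker q).starProjection ψ - ψ + w := by
  have hpw : p (ψ + w) = w := by
    rw [map_add, mem_ker.mp hψ, hp.isIdempotentElem.mem_range_iff.mp hw, zero_add]
  have hproj : (ker p ⊓ ker q).starProjection ψ = ψ + w - q (ψ + w) := by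
    refine hp.starProjection_ker_inf_ker_eq hq (Submodule.mem_inf.mpr ⟨?_, ?_⟩) ?_
    · rw [mem_ker, map_sub, hpw, hpq, sub_self]
    · rw [mem_ker, map_sub, hq.apply_apply, sub_self]
    · rw [show ψ - (ψ + w - q (ψ + w)) = q (ψ + w) - w by abel]
      exact Submodule.sub_mem _ (Submodule.mem_sup_right (mem_range_self q _))
        (Submodule.mem_sup_left hw)
  simp only [comp_apply, sub_apply, smul_apply, id_apply, map_sub, map_smul, hpq, hpw, hproj]
  module

variable [FiniteDimensional 𝕜 E]

lemma isSymmetricProjection_of_adjoint_eq (hp : p ∘ₗ p = p) (hpa : adjoint p = p) :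
    p.IsSymmetricProjection :=
  ⟨hp, (isSymmetric_iff_isSelfAdjoint p).mpr (isSelfAdjoint_iff'.mpr hpa)⟩

lemma IsSymmetricProjection.sub_comp_comp_eq_adjoint_comp_self (hp : p.IsSymmetricProjection)
    (hq : q.IsSymmetricProjection) :
    p - p ∘ₗ q ∘ₗ p = adjoint (p - q ∘ₗ p) ∘ₗ (p - q ∘ₗ p) := by
  have hpp : p ∘ₗ p = p := hp.isIdempotentElem.eq
  have hqq (f : E →ₗ[𝕜] E) : q ∘ₗ q ∘ₗ f = q ∘ₗ f := by
    rw [← comp_assoc, show q ∘ₗ q = q from hq.isIdempotentElem.eq]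
  rw [map_sub, adjoint_comp, hp.isSymmetric.adjoint_eq, hq.isSymmetric.adjoint_eq]
  simp only [sub_comp, comp_sub, comp_assoc, hpp, hqq]
  abel

lemma IsSymmetricProjection.adjoint_sub_comp_comp (hp : p.IsSymmetricProjection)
    (hq : q.IsSymmetricProjection) : adjoint (p - p ∘ₗ q ∘ₗ p) = p - p ∘ₗ q ∘ₗ p := by
  rw [hp.sub_comp_comp_eq_adjoint_comp_self hq, adjoint_comp, adjoint_adjoint]

lemma IsSymmetricProjection.range_sub_comp_comp (hp : p.IsSymmetricProjection)
    (hq : q.IsSymmetricProjection) : range (p - p ∘ₗ q ∘ₗ p) = range (p - p ∘ₗ q) := by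
  rw [hp.sub_comp_comp_eq_adjoint_comp_self hq, range_adjoint_comp_self, map_sub, adjoint_comp,
    hp.isSymmetric.adjoint_eq, hq.isSymmetric.adjoint_eq]

end LinearMap

namespace IsMPInv

variable {H : Type*} [NormedAddCommGroup H] [InnerProductSpace ℂ H] [FiniteDimensional ℂ H]
  {A B : H →ₗ[ℂ] H}

lemma apply_apply_of_mem_range (h : IsMPInv A B) {x : H} (hx : x ∈ range A) : A (B x) = x := by
  obtain ⟨y, rfl⟩ := hx
  exact congr($(h.1) y)

lemma range_le (hA : adjoint A = A) (h : IsMPInv A B) : range B ≤ range A :=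
  calc range B = range (A ∘ₗ adjoint B ∘ₗ B) := by
        conv_lhs => rw [← h.2.1, ← comp_assoc, ← h.2.2.2, adjoint_comp, hA, comp_assoc]
    _ ≤ range A := range_comp_le_range _ _

lemma comp_comp_eq_of_comp_eq (hA : adjoint A = A) (h : IsMPInv A B) {P : H →ₗ[ℂ] H}
    (hP : A ∘ₗ P = A) : A ∘ₗ B ∘ₗ P = A ∘ₗ B := by
  have hAB : A ∘ₗ B = adjoint B ∘ₗ A := by conv_lhs => rw [← h.2.2.1, adjoint_comp, hA]
  rw [← comp_assoc, hAB, comp_assoc, hP]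

variable {p q : H →ₗ[ℂ] H}

lemma range_le_of_sub_comp_comp (hp : p.IsSymmetricProjection) (hq : q.IsSymmetricProjection)
    (hB : IsMPInv (p - p ∘ₗ q ∘ₗ p) B) : range B ≤ range p :=
  calc range B ≤ range (p - p ∘ₗ q ∘ₗ p) := hB.range_le (hp.adjoint_sub_comp_comp hq)
    _ = range (p ∘ₗ (LinearMap.id - q)) := by rw [hp.range_sub_comp_comp hq, comp_sub, comp_id]
    _ ≤ range p := range_comp_le_range _ _

lemma apply_apply_add_eq_of_sub_comp_comp (hp : p.IsSymmetricProjection)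
    (hq : q.IsSymmetricProjection) (hB : IsMPInv (p - p ∘ₗ q ∘ₗ p) B) {ψ : H} (hψ : ψ ∈ ker p) :
    p (q (ψ + B (q ψ))) = B (q ψ) := by
  set A := p - p ∘ₗ q ∘ₗ p with hA
  have hAp : A ∘ₗ p = A := by
    rw [sub_comp, comp_assoc, comp_assoc, show p ∘ₗ p = p from hp.isIdempotentElem.eq]
  have hpqψ : p (q ψ) ∈ range A := by
    rw [hp.range_sub_comp_comp hq]
    exact ⟨-ψ, by simp [mem_ker.mp hψ]⟩
  have hAw : A (B (q ψ)) = p (q ψ) :=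
    calc A (B (q ψ)) = (A ∘ₗ B ∘ₗ p) (q ψ) := by
          rw [hB.comp_comp_eq_of_comp_eq (hp.adjoint_sub_comp_comp hq) hAp]; rfl
      _ = p (q ψ) := hB.apply_apply_of_mem_range hpqψ
  have hpw : p (B (q ψ)) = B (q ψ) :=
    hp.isIdempotentElem.mem_range_iff.mp (hB.range_le_of_sub_comp_comp hp hq (mem_range_self _ _))
  rw [hA, LinearMap.sub_apply, comp_apply, comp_apply, hpw] at hAw
  rw [map_add, map_add, ← hAw]
  abel

end IsMPInv

theorem stmt0 {H : Type*} [NormedAddCommGroup H] [InnerProductSpace ℂ H]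
    [FiniteDimensional ℂ H]
    (Pr Dl : H →ₗ[ℂ] H)
    (hPr : Pr ∘ₗ Pr = Pr) (hPra : adjoint Pr = Pr)
    (hDl : Dl ∘ₗ Dl = Dl) (hDla : adjoint Dl = Dl)
    (B : H →ₗ[ℂ] H) (hB : IsMPInv (Pr - Pr ∘ₗ Dl ∘ₗ Pr) B)
    (ψ : H) (hψ : ψ ∈ ker Pr)
    (w : H) (hw : w = B (Dl ψ))
    (U : H →ₗ[ℂ] H)
    (hU : U = ((2 : ℂ) • Pr - LinearMap.id) ∘ₗ ((2 : ℂ) • Dl - LinearMap.id)) :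
    w ∈ range Pr ∧
      U (ψ + w) = (((2 : ℂ) • projL (ker Pr ⊓ ker Dl) - LinearMap.id : H →ₗ[ℂ] H)) ψ + w := by
  have hP := isSymmetricProjection_of_adjoint_eq hPr hPra
  have hD := isSymmetricProjection_of_adjoint_eq hDl hDla
  have hwP : w ∈ range Pr := hw ▸ hB.range_le_of_sub_comp_comp hP hD (mem_range_self B (Dl ψ))
  have hPD : Pr (Dl (ψ + w)) = w := hw ▸ hB.apply_apply_add_eq_of_sub_comp_comp hP hD hψ
  subst hU
  refine ⟨hwP, ?_⟩
  rw [hP.reflection_comp_reflection_apply_add hD hψ hwP hPD]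
  rfl -- `projL K` unfolds to `K.starProjection`
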